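/- Let ‖·‖ be a cone linear absolute norm with respect to a proper cone K. If M_i ≥^K N_i ≥^K 0 for i = 1, …, k, then ‖M_1 ⋯ M_k‖ ≥ ‖N_1 ⋯ N_k‖ in the induced operator norm. -/

import Mathlib

/-! Write `P = N₁ ⋯ N_k` and `Q = M₁ ⋯ M_k`. From `A C - B D = (A - B) C + B (C - D)` one gets
`Q ≥^K P ≥^K 0` by induction. Let `f ∈ K*` be the functional with `‖u‖ = f u` on `K`. For
`x = v - w` with `v, w ∈ K`, cone absoluteness applied to `P x = P v - P w` and cone linearity give
`‖P x‖ ≤ f (P (v + w)) ≤ f (Q (v + w)) = ‖Q (v + w)‖ ≤ ‖Q‖ ‖v + w‖`,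
and the infimum of `‖v + w‖` over such decompositions is `‖x‖` by cone absoluteness again.
That `‖Q‖` is finite follows from the equivalence of the norm with the sup norm. -/

open Matrix Set

/-- A proper cone: a nonempty-interior, closed, convex, pointed set closed under
nonnegative scalar multiplication. -/
def IsProperCone {d : ℕ} (K : Set (Fin d → ℝ)) : Prop :=
  (∀ x ∈ K, ∀ c : ℝ, 0 ≤ c → c • x ∈ K) ∧ IsClosed K ∧ Convex ℝ K ∧
    (interior K).Nonempty ∧ ∀ x ∈ K, -x ∈ K → x = 0

/-- `M` leaves the cone `K` invariant: `M K ⊆ K`. -/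
def LeavesInvariant {d : ℕ} (M : Matrix (Fin d) (Fin d) ℝ) (K : Set (Fin d → ℝ)) : Prop :=
  ∀ x ∈ K, M.mulVec x ∈ K

/-- `M` is `K`-positive: `M (K \ {0}) ⊆ interior K`. -/
def IsKPos {d : ℕ} (M : Matrix (Fin d) (Fin d) ℝ) (K : Set (Fin d → ℝ)) : Prop :=
  ∀ x ∈ K, x ≠ 0 → M.mulVec x ∈ interior K

/-- The dual cone `K* = {f | fᵀ x ≥ 0 for all x ∈ K}`. -/
def dualConeSet {d : ℕ} (K : Set (Fin d → ℝ)) : Set (Fin d → ℝ) :=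
  {f | ∀ x ∈ K, 0 ≤ f ⬝ᵥ x}

/-- The spectral radius of a real matrix: the supremum of the absolute values of its
(complex) eigenvalues. -/
noncomputable def specRad {d : ℕ} (M : Matrix (Fin d) (Fin d) ℝ) : ℝ :=
  sSup {r | ∃ z : ℂ, Module.End.HasEigenvalue (Matrix.toLin' (M.map Complex.ofReal)) z ∧
    r = ‖z‖}

/-- `nrm` is a norm on `Fin d → ℝ`. -/
def IsVecNorm {d : ℕ} (nrm : (Fin d → ℝ) → ℝ) : Prop :=
  (∀ x, 0 ≤ nrm x) ∧ (∀ x, nrm x = 0 ↔ x = 0) ∧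
    (∀ (c : ℝ) x, nrm (c • x) = |c| * nrm x) ∧ ∀ x y, nrm (x + y) ≤ nrm x + nrm y

/-- `nrm` is cone absolute with respect to `K`. -/
def IsConeAbsolute {d : ℕ} (K : Set (Fin d → ℝ)) (nrm : (Fin d → ℝ) → ℝ) : Prop :=
  ∀ x, nrm x = sInf {r | ∃ v ∈ K, ∃ w ∈ K, x = v - w ∧ r = nrm (v + w)}

/-- `nrm` is cone linear with respect to `K`. -/
def IsConeLinear {d : ℕ} (K : Set (Fin d → ℝ)) (nrm : (Fin d → ℝ) → ℝ) : Prop :=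
  ∃ f ∈ dualConeSet K, ∀ x ∈ K, nrm x = f ⬝ᵥ x

/-- A cone linear absolute norm with respect to `K`. -/
def IsCLANorm {d : ℕ} (K : Set (Fin d → ℝ)) (nrm : (Fin d → ℝ) → ℝ) : Prop :=
  IsVecNorm nrm ∧ IsConeAbsolute K nrm ∧ IsConeLinear K nrm

/-- The operator norm of a matrix induced by the vector norm `nrm`. -/
noncomputable def opNorm {d : ℕ} (nrm : (Fin d → ℝ) → ℝ) (M : Matrix (Fin d) (Fin d) ℝ) : ℝ :=
  sSup {r | ∃ x : Fin d → ℝ, x ≠ 0 ∧ r = nrm (M.mulVec x) / nrm x}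

/-- The cone linear absolute norm `‖·‖_f` induced by `f ∈ int K*`. -/
noncomputable def coneNorm {d : ℕ} (K : Set (Fin d → ℝ)) (f : Fin d → ℝ)
    (x : Fin d → ℝ) : ℝ :=
  sInf {r | ∃ v ∈ K, ∃ w ∈ K, x = v - w ∧ r = f ⬝ᵥ (v + w)}

variable {d : ℕ} {K : Set (Fin d → ℝ)} {nrm : (Fin d → ℝ) → ℝ}

namespace IsVecNorm

theorem map_zero (h : IsVecNorm nrm) : nrm 0 = 0 := (h.2.1 0).2 rfl

theorem pos (h : IsVecNorm nrm) {x : Fin d → ℝ} (hx : x ≠ 0) : 0 < nrm x :=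
  (h.1 x).lt_of_ne fun h0 => hx ((h.2.1 x).1 h0.symm)

theorem le_mul_norm (h : IsVecNorm nrm) (x : Fin d → ℝ) :
    nrm x ≤ (∑ i, nrm (Pi.single i 1)) * ‖x‖ := by
  calc nrm x = nrm (∑ i, x i • Pi.single i 1) := by rw [← pi_eq_sum_univ' x]
    _ ≤ ∑ i, nrm (x i • Pi.single i 1) :=
        Finset.le_sum_of_subadditive nrm h.map_zero.le h.2.2.2 _ _
    _ = ∑ i, |x i| * nrm (Pi.single i 1) := by simp only [h.2.2.1]
    _ ≤ ∑ i, ‖x‖ * nrm (Pi.single i 1) := by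
        gcongr with i
        · exact h.1 _
        · exact norm_le_pi_norm x i
    _ = (∑ i, nrm (Pi.single i 1)) * ‖x‖ := by rw [Finset.sum_mul]; simp only [mul_comm]

theorem continuous (h : IsVecNorm nrm) : Continuous nrm := by
  set B := ∑ i, nrm (Pi.single i (1 : ℝ) : Fin d → ℝ)
  have hB : 0 ≤ B := Finset.sum_nonneg fun i _ => h.1 _
  refine (LipschitzWith.of_le_add_mul B.toNNReal fun x y => ?_).continuous
  calc nrm x = nrm (y + (x - y)) := by rw [add_sub_cancel]
    _ ≤ nrm y + nrm (x - y) := h.2.2.2 _ _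
    _ ≤ nrm y + B.toNNReal * dist x y := by
        rw [Real.coe_toNNReal _ hB, dist_eq_norm]
        exact add_le_add_right (h.le_mul_norm _) _

-- `nrm` attains a positive minimum on the compact unit sphere of the sup norm.
theorem exists_pos_mul_norm_le (h : IsVecNorm nrm) :
    ∃ c > 0, ∀ x : Fin d → ℝ, c * ‖x‖ ≤ nrm x := by
  obtain ⟨c, hc, hmin⟩ := (isCompact_sphere (0 : Fin d → ℝ) 1).exists_forall_le'
    h.continuous.continuousOn fun x hx => h.pos (ne_zero_of_mem_unit_sphere ⟨x, hx⟩)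
  refine ⟨c, hc, fun x => ?_⟩
  rcases eq_or_ne x 0 with rfl | hx
  · simp [h.map_zero]
  have hxn : 0 < ‖x‖ := norm_pos_iff.2 hx
  have hunit := hmin (‖x‖⁻¹ • x) (by simp [norm_smul, hxn.ne'])
  rw [h.2.2.1, abs_of_pos (inv_pos.2 hxn), ← div_eq_inv_mul, le_div_iff₀ hxn] at hunit
  exact hunit

theorem exists_mulVec_le (h : IsVecNorm nrm) (A : Matrix (Fin d) (Fin d) ℝ) :
    ∃ C, ∀ x, nrm (A *ᵥ x) ≤ C * nrm x := by
  obtain ⟨c, hc, hlow⟩ := h.exists_pos_mul_norm_le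
  set L := LinearMap.toContinuousLinearMap (Matrix.toLin' A)
  set B := ∑ i, nrm (Pi.single i (1 : ℝ) : Fin d → ℝ)
  have hB : 0 ≤ B := Finset.sum_nonneg fun i _ => h.1 _
  refine ⟨B * ‖L‖ / c, fun x => ?_⟩
  calc nrm (A *ᵥ x) ≤ B * ‖A *ᵥ x‖ := h.le_mul_norm _
    _ ≤ B * (‖L‖ * ‖x‖) := by gcongr; simpa [L] using L.le_opNorm x
    _ = B * ‖L‖ / c * (c * ‖x‖) := by field_simp
    _ ≤ B * ‖L‖ / c * nrm x := by gcongr; exact hlow x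

theorem le_opNorm (h : IsVecNorm nrm) (A : Matrix (Fin d) (Fin d) ℝ) (x : Fin d → ℝ) :
    nrm (A *ᵥ x) ≤ opNorm nrm A * nrm x := by
  rcases eq_or_ne x 0 with rfl | hx
  · simp [h.map_zero]
  obtain ⟨C, hC⟩ := h.exists_mulVec_le A
  have hbdd : BddAbove {r | ∃ x : Fin d → ℝ, x ≠ 0 ∧ r = nrm (A *ᵥ x) / nrm x} := by
    refine ⟨C, ?_⟩
    rintro r ⟨y, hy, rfl⟩
    exact (div_le_iff₀ (h.pos hy)).2 (hC y)
  exact (div_le_iff₀ (h.pos hx)).1 (le_csSup hbdd ⟨x, hx, rfl⟩)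

theorem opNorm_nonneg (h : IsVecNorm nrm) (A : Matrix (Fin d) (Fin d) ℝ) :
    0 ≤ opNorm nrm A :=
  Real.sSup_nonneg <| by
    rintro r ⟨x, -, rfl⟩
    exact div_nonneg (h.1 _) (h.1 _)

theorem opNorm_le (h : IsVecNorm nrm) {A : Matrix (Fin d) (Fin d) ℝ} {C : ℝ} (hC : 0 ≤ C)
    (hA : ∀ x, nrm (A *ᵥ x) ≤ C * nrm x) : opNorm nrm A ≤ C :=
  Real.sSup_le (by
    rintro r ⟨x, hx, rfl⟩
    exact (div_le_iff₀ (h.pos hx)).2 (hA x)) hC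

end IsVecNorm

namespace IsProperCone

theorem zero_mem (hK : IsProperCone K) : (0 : Fin d → ℝ) ∈ K := by
  obtain ⟨e, he⟩ := hK.2.2.2.1
  simpa using hK.1 e (interior_subset he) 0 le_rfl

theorem add_mem (hK : IsProperCone K) {x y : Fin d → ℝ} (hx : x ∈ K) (hy : y ∈ K) :
    x + y ∈ K := by
  have hmid : (1 / 2 : ℝ) • x + (1 / 2 : ℝ) • y ∈ K :=
    hK.2.2.1 hx hy (by norm_num) (by norm_num) (by norm_num)
  simpa [← smul_add, smul_smul] using hK.1 _ hmid 2 (by norm_num)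

/-- `K` is generating: `x = t⁻¹ (e + t x) - t⁻¹ e` for an interior point `e` and `t` small. -/
theorem exists_sub_eq (hK : IsProperCone K) (x : Fin d → ℝ) :
    ∃ v ∈ K, ∃ w ∈ K, x = v - w := by
  obtain ⟨e, he⟩ := hK.2.2.2.1
  obtain ⟨ε, hε, hball⟩ := Metric.mem_nhds_iff.1 (mem_interior_iff_mem_nhds.1 he)
  set t : ℝ := ε / (2 * (‖x‖ + 1))
  have ht : 0 < t := by positivity
  have hnear : e + t • x ∈ K := by
    apply hball
    rw [Metric.mem_ball, dist_eq_norm, add_sub_cancel_left, norm_smul, Real.norm_of_nonneg ht.le,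
      div_mul_eq_mul_div, div_lt_iff₀ (by positivity)]
    nlinarith [norm_nonneg x]
  refine ⟨t⁻¹ • (e + t • x), hK.1 _ hnear _ (inv_nonneg.2 ht.le),
    t⁻¹ • e, hK.1 _ (hball (Metric.mem_ball_self hε)) _ (inv_nonneg.2 ht.le), ?_⟩
  rw [← smul_sub, add_sub_cancel_left, smul_smul, inv_mul_cancel₀ ht.ne', one_smul]

end IsProperCone

namespace LeavesInvariant

theorem mul {A B : Matrix (Fin d) (Fin d) ℝ} (hA : LeavesInvariant A K)
    (hB : LeavesInvariant B K) : LeavesInvariant (A * B) K := fun x hx => by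
  rw [← mulVec_mulVec]
  exact hA _ (hB x hx)

theorem add (hK : IsProperCone K) {A B : Matrix (Fin d) (Fin d) ℝ} (hA : LeavesInvariant A K)
    (hB : LeavesInvariant B K) : LeavesInvariant (A + B) K := fun x hx => by
  rw [add_mulVec]
  exact hK.add_mem (hA x hx) (hB x hx)

theorem of_sub (hK : IsProperCone K) {A B : Matrix (Fin d) (Fin d) ℝ}
    (hAB : LeavesInvariant (A - B) K) (hB : LeavesInvariant B K) : LeavesInvariant A K := by
  simpa using hAB.add hK hB

theorem mul_sub_mul (hK : IsProperCone K) {A B C D : Matrix (Fin d) (Fin d) ℝ}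
    (hAB : LeavesInvariant (A - B) K) (hB : LeavesInvariant B K)
    (hCD : LeavesInvariant (C - D) K) (hD : LeavesInvariant D K) :
    LeavesInvariant (A * C - B * D) K := by
  have hsplit : A * C - B * D = (A - B) * C + B * (C - D) := by noncomm_ring
  rw [hsplit]
  exact (hAB.mul (hCD.of_sub hK hD)).add hK (hB.mul hCD)

theorem prod_ofFn (hK : IsProperCone K) {k : ℕ} {M N : Fin k → Matrix (Fin d) (Fin d) ℝ}
    (hMN : ∀ i, LeavesInvariant (M i - N i) K) (hN : ∀ i, LeavesInvariant (N i) K) :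
    LeavesInvariant (List.ofFn N).prod K ∧
      LeavesInvariant ((List.ofFn M).prod - (List.ofFn N).prod) K := by
  induction k with
  | zero => simpa [LeavesInvariant] using fun _ _ => hK.zero_mem
  | succ k ih =>
    obtain ⟨hNs, hMNs⟩ := ih (fun i => hMN i.succ) (fun i => hN i.succ)
    simp only [List.ofFn_succ, List.prod_cons]
    exact ⟨(hN 0).mul hNs, mul_sub_mul hK (hMN 0) (hN 0) hMNs hNs⟩

end LeavesInvariant

namespace IsConeAbsolute

theorem le_add_of_sub_eq (habs : IsConeAbsolute K nrm) (hnn : ∀ x, 0 ≤ nrm x)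
    {x v w : Fin d → ℝ} (hv : v ∈ K) (hw : w ∈ K) (hx : x = v - w) : nrm x ≤ nrm (v + w) := by
  rw [habs x]
  exact csInf_le ⟨0, by rintro r ⟨v, -, w, -, -, rfl⟩; exact hnn _⟩ ⟨v, hv, w, hw, hx, rfl⟩

theorem le_mul_of_forall_sub (habs : IsConeAbsolute K nrm) (hK : IsProperCone K)
    {g : (Fin d → ℝ) → ℝ} {a : ℝ} (ha : 0 ≤ a)
    (hg : ∀ v ∈ K, ∀ w ∈ K, g (v - w) ≤ a * nrm (v + w)) (x : Fin d → ℝ) :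
    g x ≤ a * nrm x := by
  obtain ⟨v, hv, w, hw, hx⟩ := hK.exists_sub_eq x
  rw [habs x, ← smul_eq_mul, ← Real.sInf_smul_of_nonneg ha]
  refine le_csInf ⟨_, Set.smul_mem_smul_set ⟨v, hv, w, hw, hx, rfl⟩⟩ ?_
  rintro _ ⟨_, ⟨v, hv, w, hw, rfl, rfl⟩, rfl⟩
  exact hg v hv w hw

end IsConeAbsolute

theorem opNorm_le_opNorm_of_leavesInvariant (hK : IsProperCone K) (hnrm : IsCLANorm K nrm)
    {P Q : Matrix (Fin d) (Fin d) ℝ} (hP : LeavesInvariant P K)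
    (hQP : LeavesInvariant (Q - P) K) : opNorm nrm P ≤ opNorm nrm Q := by
  obtain ⟨hvec, habs, f, hf, hflin⟩ := hnrm
  have hQ : LeavesInvariant Q K := hQP.of_sub hK hP
  refine hvec.opNorm_le (hvec.opNorm_nonneg Q) fun x => ?_
  refine habs.le_mul_of_forall_sub (g := fun y => nrm (P *ᵥ y)) hK (hvec.opNorm_nonneg Q)
    (fun v hv w hw => ?_) x
  have hvw : v + w ∈ K := hK.add_mem hv hw
  have hdual : 0 ≤ f ⬝ᵥ (Q - P) *ᵥ (v + w) := hf _ (hQP _ hvw)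
  rw [sub_mulVec, dotProduct_sub, sub_nonneg] at hdual
  calc nrm (P *ᵥ (v - w)) ≤ nrm (P *ᵥ v + P *ᵥ w) :=
        habs.le_add_of_sub_eq hvec.1 (hP v hv) (hP w hw) (mulVec_sub P v w)
    _ = f ⬝ᵥ P *ᵥ (v + w) := by rw [← mulVec_add, hflin _ (hP _ hvw)]
    _ ≤ f ⬝ᵥ Q *ᵥ (v + w) := hdual
    _ = nrm (Q *ᵥ (v + w)) := (hflin _ (hQ _ hvw)).symm
    _ ≤ opNorm nrm Q * nrm (v + w) := hvec.le_opNorm Q _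

/-- If `M_i ≥^K N_i ≥^K 0` for `i = 1, …, k`, then
`‖M_1 ⋯ M_k‖ ≥ ‖N_1 ⋯ N_k‖` in the operator norm induced by a cone linear absolute norm. -/
theorem stmt_4 {d k : ℕ} (K : Set (Fin d → ℝ)) (hK : IsProperCone K)
    (nrm : (Fin d → ℝ) → ℝ) (hnrm : IsCLANorm K nrm)
    (M N : Fin k → Matrix (Fin d) (Fin d) ℝ)
    (hMN : ∀ i, LeavesInvariant (M i - N i) K) (hN : ∀ i, LeavesInvariant (N i) K) :
    opNorm nrm (List.ofFn N).prod ≤ opNorm nrm (List.ofFn M).prod := by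
  obtain ⟨hNprod, hMNprod⟩ := LeavesInvariant.prod_ofFn hK hMN hN
  exact opNorm_le_opNorm_of_leavesInvariant hK hnrm hNprod hMNprod
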